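/- arXiv:2501.12174 — 2 statements merged into one kernel-verified Lean document; each statement's English description precedes it below -/
import Mathlib

section
/- For a probability vector p in (0,1)^N and modulus m > 0, the spike entropy S(p,m) = Σ_k p_k/(1+m·p_k) satisfies 1/(1+m) ≤ S(p,m) ≤ N/(N+m), with the maximum attained at the uniform distribution. -/
/-!
Each term is `f (p k)` with `f x = x / (1 + m x)`. Since `p k ≤ 1`, `f (p k) ≥ p k / (1 + m)`,
and summing gives the lower bound. The function `f` is concave, so it lies below its tangent
line at `1 / N`; summing the tangent line over a probability vector kills the linear part and
leaves `N f (1 / N) = N / (N + m)`.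
-/

open Finset

/-- The gap to the tangent line at `a` is `m (x - a)² / ((1 + m a)² (1 + m x))`. -/
theorem div_one_add_mul_le_tangent {m a x : ℝ} (hm : 0 ≤ m) (ha : 0 < 1 + m * a)
    (hx : 0 < 1 + m * x) :
    x / (1 + m * x) ≤ a / (1 + m * a) + (x - a) / (1 + m * a) ^ 2 := by
  have gap : a / (1 + m * a) + (x - a) / (1 + m * a) ^ 2 - x / (1 + m * x)
      = m * (x - a) ^ 2 / ((1 + m * a) ^ 2 * (1 + m * x)) := by
    have ha₂ : (1 + m * a) ^ 2 ≠ 0 := pow_ne_zero 2 ha.ne'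
    rw [div_add_div _ _ ha.ne' ha₂, div_sub_div _ _ (mul_ne_zero ha.ne' ha₂) hx.ne',
      div_eq_div_iff (mul_ne_zero (mul_ne_zero ha.ne' ha₂) hx.ne') (mul_ne_zero ha₂ hx.ne')]
    ring
  have : 0 ≤ m * (x - a) ^ 2 / ((1 + m * a) ^ 2 * (1 + m * x)) := by positivity
  linarith

theorem div_one_add_le_div_one_add_mul {m x : ℝ} (hm : 0 ≤ m) (hx₀ : 0 ≤ x) (hx₁ : x ≤ 1) :
    x / (1 + m) ≤ x / (1 + m * x) :=
  div_le_div_of_nonneg_left hx₀ (by positivity) (by nlinarith)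

section SpikeEntropy

variable {ι : Type*} [Fintype ι]

noncomputable def spikeEntropy (p : ι → ℝ) (m : ℝ) : ℝ :=
  ∑ k, p k / (1 + m * p k)

theorem one_div_one_add_le_spikeEntropy {p : ι → ℝ} {m : ℝ} (hm : 0 ≤ m)
    (hp : ∀ k, 0 ≤ p k) (hsum : ∑ k, p k = 1) :
    1 / (1 + m) ≤ spikeEntropy p m := by
  have hp_le_one (k : ι) : p k ≤ 1 :=
    hsum ▸ single_le_sum (fun j _ => hp j) (mem_univ k)
  calc 1 / (1 + m) = ∑ k, p k / (1 + m) := by rw [← sum_div, hsum]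
    _ ≤ spikeEntropy p m :=
      sum_le_sum fun k _ => div_one_add_le_div_one_add_mul hm (hp k) (hp_le_one k)

theorem spikeEntropy_le_spikeEntropy_uniform {p : ι → ℝ} {m : ℝ} (hm : 0 ≤ m)
    (hp : ∀ k, 0 ≤ p k) (hsum : ∑ k, p k = 1) (hι : Fintype.card ι ≠ 0) :
    spikeEntropy p m ≤ spikeEntropy (fun _ : ι => 1 / (Fintype.card ι : ℝ)) m := by
  set a : ℝ := 1 / Fintype.card ι
  have ha : 0 < 1 + m * a := by positivity
  have tangent_terms_cancel : ∑ k, (p k - a) / (1 + m * a) ^ 2 = 0 := by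
    have hsum_a : ∑ _k : ι, a = 1 := by
      simp only [sum_const, card_univ, nsmul_eq_mul, a]
      field_simp
    rw [← sum_div, sum_sub_distrib, hsum, hsum_a, sub_self, zero_div]
  calc spikeEntropy p m ≤ ∑ k, (a / (1 + m * a) + (p k - a) / (1 + m * a) ^ 2) :=
        sum_le_sum fun k _ =>
          div_one_add_mul_le_tangent hm ha (by have := hp k; positivity)
    _ = spikeEntropy (fun _ : ι => a) m := by
        rw [sum_add_distrib, tangent_terms_cancel, add_zero, spikeEntropy]

theorem spikeEntropy_uniform (m : ℝ) (hι : Fintype.card ι ≠ 0) :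
    spikeEntropy (fun _ : ι => 1 / (Fintype.card ι : ℝ)) m
      = Fintype.card ι / (Fintype.card ι + m) := by
  have hn : (Fintype.card ι : ℝ) ≠ 0 := Nat.cast_ne_zero.mpr hι
  simp only [spikeEntropy, sum_const, card_univ, nsmul_eq_mul]
  field_simp

end SpikeEntropy

/-- Spike entropy bounds: for a probability vector `p ∈ (0,1)^N` and modulus `m > 0`,
`1/(1+m) ≤ S(p,m) ≤ N/(N+m)`, with the maximum attained at the uniform distribution. -/
theorem spike_entropy_bounds (N : ℕ) (hN : 0 < N) (p : Fin N → ℝ) (m : ℝ) (hm : 0 < m)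
    (hp : ∀ k, 0 < p k ∧ p k < 1) (hsum : ∑ k, p k = 1) :
    1 / (1 + m) ≤ ∑ k, p k / (1 + m * p k) ∧
    (∑ k, p k / (1 + m * p k)) ≤ N / (N + m) ∧
    ((∀ k, p k = 1 / N) → ∑ k, p k / (1 + m * p k) = N / (N + m)) := by
  have hp₀ (k : Fin N) : 0 ≤ p k := (hp k).1.le
  have hcard : Fintype.card (Fin N) ≠ 0 := by simpa using hN.ne'
  have uniform := spikeEntropy_uniform (ι := Fin N) m hcard
  rw [Fintype.card_fin] at uniform
  refine ⟨one_div_one_add_le_spikeEntropy hm.le hp₀ hsum, ?_, fun h_unif => ?_⟩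
  · have := spikeEntropy_le_spikeEntropy_uniform hm.le hp₀ hsum hcard
    rwa [Fintype.card_fin, uniform] at this
  · rw [← funext h_unif] at uniform
    exact uniform
end

section
/- Suppose a probability vector p ∈ (0,1)^N is randomly partitioned into a green list G of size γN and a red list of size (1-γ)N, and the watermarked distribution boosts green-list probabilities by multiplying by α = exp(δ) and renormalizing. Then the probability that a token sampled from the watermarked distribution lies in G is at least (γα/(1+(α-1)γ)) · S(p, (1-γ)(α-1)/(1+(α-1)γ)), where S is spike entropy. -/
/-!
Exchanging the two sums, the green probability times the number `K` of green lists is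
`∑ k, α p_k ∑_{G ∋ k} 1 / (1 + (α - 1) p(G))`. Exactly `γ K` green lists contain `k`, so the
harmonic–arithmetic mean inequality bounds the inner sum below by
`γ K / (1 + (α - 1) m_k)`, where `m_k` is the mean of `p(G)` over those lists. Counting the
lists that contain both `k` and `j ≠ k` gives
`m_k = p_k + (g - 1) / (N - 1) · (1 - p_k) ≤ γ + (1 - γ) p_k`, and the resulting lower bound is the
spike entropy term after rearranging.
-/

open Finset

lemma card_filter_powersetCard_subset_mul_choose {α : Type*} [DecidableEq α] {s t : Finset α}
    (hst : s ⊆ t) (n : ℕ) :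
    #{G ∈ t.powersetCard n | s ⊆ G} * (#t).choose #s = (#t).choose n * n.choose #s := by
  by_cases hsn : #s ≤ n
  · rw [card_filter_powersetCard_subset s t n hst hsn, Nat.choose_mul hsn, mul_comm]
  · push Not at hsn
    rw [Nat.choose_eq_zero_of_lt hsn, mul_zero, mul_eq_zero, card_eq_zero, filter_eq_empty_iff]
    refine Or.inl fun G hG hsG => ?_
    have := card_le_card hsG
    rw [(mem_powersetCard.1 hG).2] at this
    omega

lemma card_div_le_sum_one_div {β : Type*} (T : Finset β) {Q : β → ℝ} (hQ : ∀ x ∈ T, 0 < Q x)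
    {D : ℝ} (hD : ∑ x ∈ T, Q x ≤ #T * D) : #T / D ≤ ∑ x ∈ T, 1 / Q x := by
  rcases T.eq_empty_or_nonempty with rfl | hT
  · simp
  have hcard : (#T : ℝ) ≠ 0 := by exact_mod_cast hT.card_pos.ne'
  calc (#T : ℝ) / D = #T ^ 2 / (#T * D) := by rw [sq, mul_div_mul_left _ _ hcard]
    _ ≤ #T ^ 2 / ∑ x ∈ T, Q x := div_le_div_of_nonneg_left (sq_nonneg _) (sum_pos hQ hT) hD
    _ ≤ ∑ x ∈ T, 1 / Q x := by simpa using sq_sum_div_le_sum_sq_div T (fun _ => (1 : ℝ)) hQ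

section GreenLists

variable {ι : Type*} [Fintype ι] [DecidableEq ι] {g : ℕ} {γ : ℝ}

lemma sum_sum_mem_comm {M : Type*} [AddCommMonoid M] (S : Finset (Finset ι))
    (f : ι → Finset ι → M) :
    ∑ G ∈ S, ∑ k ∈ G, f k G = ∑ k, ∑ G ∈ S with k ∈ G, f k G :=
  sum_comm' fun G k => by simp

lemma card_filter_mem_powersetCard_univ (hg : (g : ℝ) = γ * Fintype.card ι) (k : ι) :
    (#{G ∈ univ.powersetCard g | k ∈ G} : ℝ) = γ * (Fintype.card ι).choose g := by
  have h := card_filter_powersetCard_subset_mul_choose (subset_univ {k}) g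
  simp only [singleton_subset_iff, card_singleton, Nat.choose_one_right, card_univ] at h
  have hN : (Fintype.card ι : ℝ) ≠ 0 := by exact_mod_cast (Fintype.card_pos_iff.2 ⟨k⟩).ne'
  refine mul_right_cancel₀ hN ?_
  rw [← Nat.cast_mul, h, Nat.cast_mul, hg]
  ring

lemma card_filter_mem_mem_powersetCard_univ_le (hg : (g : ℝ) = γ * Fintype.card ι) {j k : ι}
    (hjk : j ≠ k) :
    (#{G ∈ univ.powersetCard g | k ∈ G ∧ j ∈ G} : ℝ) ≤ γ ^ 2 * (Fintype.card ι).choose g := by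
  have h := card_filter_powersetCard_subset_mul_choose (subset_univ {k, j}) g
  simp only [insert_subset_iff, singleton_subset_iff, card_pair hjk.symm, card_univ] at h
  -- `#{G ∋ k, j} ≤ #{G ∋ k}` replaces the bound `(g - 1) / (N - 1) ≤ g / N`, i.e. `g ≤ N`.
  have hsub :
      (#{G ∈ univ.powersetCard g | k ∈ G ∧ j ∈ G} : ℝ) ≤ γ * (Fintype.card ι).choose g := by
    rw [← card_filter_mem_powersetCard_univ hg k]
    exact_mod_cast card_le_card
      (monotone_filter_right _ fun (G : Finset ι) _ (hG : k ∈ G ∧ j ∈ G) => hG.1)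
  have hN : (0 : ℝ) < Fintype.card ι := by exact_mod_cast Fintype.card_pos_iff.2 ⟨k⟩
  have hpairs := congrArg (Nat.cast (R := ℝ)) h
  push_cast [Nat.cast_choose_two, hg] at hpairs
  have hsq := mul_le_mul_of_nonneg_right hsub hN.le
  refine le_of_mul_le_mul_right ?_ (mul_pos hN hN)
  nlinarith

lemma sum_filter_mem_sum_powersetCard_univ_le (hg : (g : ℝ) = γ * Fintype.card ι) {p : ι → ℝ}
    (hp : ∀ j, 0 ≤ p j) (hsum : ∑ j, p j = 1) (k : ι) :
    ∑ G ∈ univ.powersetCard g with k ∈ G, ∑ j ∈ G, p j ≤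
      γ * (Fintype.card ι).choose g * (γ + (1 - γ) * p k) := by
  have hrest : ∑ j ∈ univ.erase k, p j = 1 - p k := by
    rw [← hsum, ← add_sum_erase _ _ (mem_univ k), add_sub_cancel_left]
  calc ∑ G ∈ univ.powersetCard g with k ∈ G, ∑ j ∈ G, p j
      = ∑ j, (#{G ∈ univ.powersetCard g | k ∈ G ∧ j ∈ G} : ℝ) * p j := by
        simp only [sum_sum_mem_comm, filter_filter, sum_const, nsmul_eq_mul]
    _ = #{G ∈ univ.powersetCard g | k ∈ G} * p k +
          ∑ j ∈ univ.erase k, (#{G ∈ univ.powersetCard g | k ∈ G ∧ j ∈ G} : ℝ) * p j := by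
        rw [← add_sum_erase _ _ (mem_univ k)]
        simp only [and_self]
    _ ≤ γ * (Fintype.card ι).choose g * p k +
          ∑ j ∈ univ.erase k, γ ^ 2 * (Fintype.card ι).choose g * p j := by
        rw [card_filter_mem_powersetCard_univ hg k]
        gcongr with j hj
        · exact hp j
        · exact card_filter_mem_mem_powersetCard_univ_le hg (ne_of_mem_erase hj)
    _ = γ * (Fintype.card ι).choose g * (γ + (1 - γ) * p k) := by
        rw [← mul_sum, hrest]
        ring

lemma mul_choose_div_le_sum_filter_mem_one_div (hg : (g : ℝ) = γ * Fintype.card ι) {p : ι → ℝ}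
    (hp : ∀ j, 0 ≤ p j) (hsum : ∑ j, p j = 1) {c : ℝ} (hc : 0 ≤ c) (k : ι) :
    γ * (Fintype.card ι).choose g / (1 + c * (γ + (1 - γ) * p k)) ≤
      ∑ G ∈ univ.powersetCard g with k ∈ G, 1 / (1 + c * ∑ j ∈ G, p j) := by
  rw [← card_filter_mem_powersetCard_univ hg k]
  refine card_div_le_sum_one_div _
    (fun G _ => add_pos_of_pos_of_nonneg one_pos (mul_nonneg hc (sum_nonneg fun j _ => hp j))) ?_
  rw [sum_add_distrib, sum_const, nsmul_one, ← mul_sum, card_filter_mem_powersetCard_univ hg k,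
    mul_one_add]
  have := mul_le_mul_of_nonneg_left (sum_filter_mem_sum_powersetCard_univ_le hg hp hsum k) hc
  linarith

end GreenLists

theorem kgw_green_probability_lower_bound_general (N : ℕ) (p : Fin N → ℝ)
    (hp : ∀ k, 0 < p k ∧ p k < 1) (hsum : ∑ k, p k = 1)
    (γ δ : ℝ) (hγ : 0 < γ) (hγ1 : γ < 1) (hδ : 0 < δ)
    (g : ℕ) (hg : (g : ℝ) = γ * N) (α : ℝ) (hα : α = Real.exp δ) :
    (γ * α / (1 + (α - 1) * γ)) *
        (∑ k, p k / (1 + ((1 - γ) * (α - 1) / (1 + (α - 1) * γ)) * p k)) ≤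
    (∑ G ∈ Finset.univ.powersetCard g,
        ∑ k ∈ G, α * p k / (1 + (α - 1) * ∑ j ∈ G, p j)) /
      ((Finset.univ : Finset (Fin N)).powersetCard g).card := by
  have hα1 : 0 ≤ α - 1 := by rw [hα, sub_nonneg]; exact Real.one_le_exp hδ.le
  have hg' : (g : ℝ) = γ * Fintype.card (Fin N) := by rwa [Fintype.card_fin]
  have hgN : g ≤ N := by exact_mod_cast hg.trans_le (mul_le_of_le_one_left N.cast_nonneg hγ1.le)
  have hboost : 0 < 1 + (α - 1) * γ := by positivity
  rw [le_div_iff₀ (by simpa using Nat.choose_pos hgN), card_powersetCard, card_univ,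
    Fintype.card_fin, sum_sum_mem_comm, mul_sum, sum_mul]
  gcongr with k
  calc _ = α * p k * (γ * N.choose g / (1 + (α - 1) * (γ + (1 - γ) * p k))) := by
        field_simp
        ring
    _ ≤ α * p k * ∑ G ∈ univ.powersetCard g with k ∈ G, 1 / (1 + (α - 1) * ∑ j ∈ G, p j) := by
        gcongr
        · exact mul_nonneg (by linarith) (hp k).1.le
        · simpa only [Fintype.card_fin] using
            mul_choose_div_le_sum_filter_mem_one_div hg' (fun j => (hp j).1.le) hsum hα1 k
    _ = _ := by simp only [mul_sum, mul_one_div]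

/-- KGW lemma: for a probability vector `p ∈ (0,1)^N`, a uniformly random green list `G`
of size `γN`, and green logits boosted by `δ` (so `α = exp δ`), the probability of
sampling a green token is at least `(γα/(1+(α-1)γ)) · S(p, (1-γ)(α-1)/(1+(α-1)γ))`. -/
theorem kgw_green_probability_lower_bound (N : ℕ) (hN : 0 < N) (p : Fin N → ℝ)
    (hp : ∀ k, 0 < p k ∧ p k < 1) (hsum : ∑ k, p k = 1)
    (γ δ : ℝ) (hγ : 0 < γ) (hγ1 : γ < 1) (hδ : 0 < δ)
    (g : ℕ) (hg : (g : ℝ) = γ * N) (α : ℝ) (hα : α = Real.exp δ) :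
    (γ * α / (1 + (α - 1) * γ)) *
        (∑ k, p k / (1 + ((1 - γ) * (α - 1) / (1 + (α - 1) * γ)) * p k)) ≤
    (∑ G ∈ Finset.univ.powersetCard g,
        ∑ k ∈ G, α * p k / (1 + (α - 1) * ∑ j ∈ G, p j)) /
      ((Finset.univ : Finset (Fin N)).powersetCard g).card :=
  kgw_green_probability_lower_bound_general N p hp hsum γ δ hγ hγ1 hδ g hg α hα
end
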